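/- arXiv:2006.16377 — 2 statements merged into one kernel-verified Lean document; each statement's English description precedes it below -/
import Mathlib

section
/- Let P be the transition matrix of an ergodic Markov chain on a finite state space with stationary distribution π (all entries positive). If there exists a reversible ergodic Markov chain Q with stationary distribution σ such that Φ^{1/2}(I−P)Φ^{-1/2} = Σ^{1/2}(I−Q)Σ^{-1/2}, where Φ = diag(π) and Σ = diag(σ), then P is itself reversible (i.e., π_i P_{ij} = π_j P_{ji} for all i, j). -/
open Matrix BigOperators

/-!
Conjugating by `diag(√w)` turns the detailed-balance condition `w i * A i j = w j * A j i` into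
symmetry of the matrix. Since conjugation fixes `1` and is linear, the hypothesis says that `P`
and `Q` have the same conjugate, which is symmetric because `Q` is reversible.
-/

namespace Matrix

variable {ι : Type*} [Fintype ι] [DecidableEq ι]

noncomputable def diagSqrtConj (w : ι → ℝ) (A : Matrix ι ι ℝ) : Matrix ι ι ℝ :=
  diagonal (fun i => √(w i)) * A * diagonal (fun i => (√(w i))⁻¹)

theorem diagSqrtConj_apply (w : ι → ℝ) (A : Matrix ι ι ℝ) (i j : ι) :
    diagSqrtConj w A i j = √(w i) * A i j * (√(w j))⁻¹ := by
  simp [diagSqrtConj, mul_diagonal, diagonal_mul]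

theorem diagSqrtConj_one {w : ι → ℝ} (hw : ∀ i, 0 < w i) : diagSqrtConj w 1 = 1 := by
  rw [diagSqrtConj, Matrix.mul_one, diagonal_mul_diagonal, ← diagonal_one]
  exact congrArg diagonal (funext fun i => mul_inv_cancel₀ (Real.sqrt_pos.2 (hw i)).ne')

theorem diagSqrtConj_sub (w : ι → ℝ) (A B : Matrix ι ι ℝ) :
    diagSqrtConj w (A - B) = diagSqrtConj w A - diagSqrtConj w B := by
  simp only [diagSqrtConj, Matrix.mul_sub, Matrix.sub_mul]

theorem isSymm_diagSqrtConj_iff {w : ι → ℝ} (hw : ∀ i, 0 < w i) (A : Matrix ι ι ℝ) :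
    (diagSqrtConj w A).IsSymm ↔ ∀ i j, w i * A i j = w j * A j i := by
  have hsq : ∀ i, √(w i) * √(w i) = w i := fun i => Real.mul_self_sqrt (hw i).le
  have hpos : ∀ i, 0 < √(w i) := fun i => Real.sqrt_pos.2 (hw i)
  simp only [IsSymm.ext_iff, diagSqrtConj_apply]
  refine forall_congr' fun i => forall_congr' fun j => ?_
  conv_rhs => rw [← hsq i, ← hsq j]
  field_simp [(hpos i).ne', (hpos j).ne']
  exact eq_comm

end Matrix

theorem stmt_0_general {n : ℕ} (P Q : Matrix (Fin n) (Fin n) ℝ)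
    (π σ : Fin n → ℝ)
    (hπpos : ∀ i, 0 < π i) (hσpos : ∀ i, 0 < σ i)
    (hQrev : ∀ i j, σ i * Q i j = σ j * Q j i)
    (heq : (Matrix.diagonal fun i => Real.sqrt (π i)) * (1 - P) *
            (Matrix.diagonal fun i => (Real.sqrt (π i))⁻¹)
         = (Matrix.diagonal fun i => Real.sqrt (σ i)) * (1 - Q) *
            (Matrix.diagonal fun i => (Real.sqrt (σ i))⁻¹)) :
    ∀ i j, π i * P i j = π j * P j i := by
  have hconj : diagSqrtConj π P = diagSqrtConj σ Q := by
    have h : diagSqrtConj π (1 - P) = diagSqrtConj σ (1 - Q) := heq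
    rwa [diagSqrtConj_sub, diagSqrtConj_sub, diagSqrtConj_one hπpos, diagSqrtConj_one hσpos,
      sub_right_inj] at h
  rw [← isSymm_diagSqrtConj_iff hπpos, hconj]
  exact (isSymm_diagSqrtConj_iff hσpos Q).2 hQrev

/-- If the Li–Zhang Laplacian of an ergodic chain `P` equals that of a
reversible ergodic chain `Q`, then `P` is itself reversible. -/
theorem stmt_0 {n : ℕ} (P Q : Matrix (Fin n) (Fin n) ℝ)
    (π σ : Fin n → ℝ)
    (hPnn : ∀ i j, 0 ≤ P i j) (hProw : ∀ i, ∑ j, P i j = 1)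
    (hQnn : ∀ i j, 0 ≤ Q i j) (hQrow : ∀ i, ∑ j, Q i j = 1)
    (hπpos : ∀ i, 0 < π i) (hσpos : ∀ i, 0 < σ i)
    (hπstat : ∀ j, ∑ i, π i * P i j = π j)
    (hσstat : ∀ j, ∑ i, σ i * Q i j = σ j)
    (hPirr : ∀ i j, ∃ k ≥ 1, 0 < (P ^ k) i j)
    (hQirr : ∀ i j, ∃ k ≥ 1, 0 < (Q ^ k) i j)
    (hQrev : ∀ i j, σ i * Q i j = σ j * Q j i)
    (heq : (Matrix.diagonal fun i => Real.sqrt (π i)) * (1 - P) *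
            (Matrix.diagonal fun i => (Real.sqrt (π i))⁻¹)
         = (Matrix.diagonal fun i => Real.sqrt (σ i)) * (1 - Q) *
            (Matrix.diagonal fun i => (Real.sqrt (σ i))⁻¹)) :
    ∀ i j, π i * P i j = π j * P j i :=
  stmt_0_general P Q π σ hπpos hσpos hQrev heq
end

section
/- Let H be a hypergraph with edge-INDEPENDENT vertex weights, i.e., γ_e(v) = γ(v) for all hyperedges e containing v. Then the EDVW transition matrix P = D_V^{-1} W D_E^{-1} R satisfies the detailed balance condition with respect to some positive vector, i.e., the resulting random walk is reversible. -/
/-!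
Take `σ v = γ v * d_V(v)`. The factor `d_V(v)` cancels the normalisation `D_V⁻¹`, so
`σ i * P i j = ∑ e ∋ i, j, γ i * γ j * ω e / δ e`, which is symmetric in `i` and `j` precisely
because the vertex weights do not depend on the hyperedge.
-/

open Matrix

theorem Matrix.inv_diagonal_of_ne_zero {ι K : Type*} [Fintype ι] [DecidableEq ι] [Field K]
    {d : ι → K} (hd : ∀ i, d i ≠ 0) : (diagonal d)⁻¹ = diagonal d⁻¹ :=
  inv_eq_right_inv <| by
    rw [diagonal_mul_diagonal, ← diagonal_one]
    exact congrArg diagonal (funext fun i => mul_inv_cancel₀ (hd i))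

theorem Matrix.diagonal_mul_mul_diagonal_mul_apply {ι κ ι' R : Type*} [Fintype ι] [Fintype κ]
    [DecidableEq ι] [DecidableEq κ] [CommSemiring R] (a : ι → R) (W : Matrix ι κ R) (b : κ → R)
    (M : Matrix κ ι' R) (i : ι) (j : ι') :
    (diagonal a * W * diagonal b * M) i j = a i * ∑ e, W i e * b e * M e j := by
  rw [mul_apply, Finset.mul_sum]
  simp only [mul_diagonal, diagonal_mul, mul_assoc]

theorem Finset.sum_ite_pos {ι : Type*} [Fintype ι] (p : ι → Prop) [DecidablePred p]
    {f : ι → ℝ} (hf : ∀ x, 0 < f x) (h : ∃ x, p x) : 0 < ∑ x, if p x then f x else 0 := by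
  obtain ⟨x, hx⟩ := h
  refine Finset.sum_pos' (fun y _ => ?_) ⟨x, Finset.mem_univ x, by simp [hx, hf x]⟩
  split_ifs
  exacts [(hf y).le, le_rfl]

theorem incidence_sum_symm {V E R : Type*} [Fintype E] [CommSemiring R] (mem : E → V → Bool)
    (γ : V → R) (ω c : E → R) (i j : V) :
    γ i * ∑ e, (if mem e i then ω e else 0) * c e * (if mem e j then γ j else 0) =
      γ j * ∑ e, (if mem e j then ω e else 0) * c e * (if mem e i then γ i else 0) := by
  simp only [Finset.mul_sum]
  refine Finset.sum_congr rfl fun e _ => ?_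
  split_ifs <;> ring

theorem stmt_17_general {n m : ℕ} (mem : Fin m → Fin n → Bool)
    (γ : Fin n → ℝ) (ω : Fin m → ℝ)
    (hγ : ∀ v, 0 < γ v) (hω : ∀ e, 0 < ω e)
    (hNoEmpty : ∀ e, ∃ v, mem e v) (hNoIso : ∀ v, ∃ e, mem e v)
    (R : Matrix (Fin m) (Fin n) ℝ) (W : Matrix (Fin n) (Fin m) ℝ)
    (hR : R = Matrix.of fun e v => if mem e v then γ v else 0)
    (hW : W = Matrix.of fun v e => if mem e v then ω e else 0)
    (dV : Fin n → ℝ) (dE : Fin m → ℝ)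
    (hdV : dV = fun v => ∑ e, W v e) (hdE : dE = fun e => ∑ v, R e v)
    (P : Matrix (Fin n) (Fin n) ℝ)
    (hP : P = (Matrix.diagonal dV)⁻¹ * W * (Matrix.diagonal dE)⁻¹ * R) :
    ∃ σ : Fin n → ℝ, (∀ v, 0 < σ v) ∧ ∀ i j, σ i * P i j = σ j * P j i := by
  have hdV_pos : ∀ v, 0 < dV v := fun v => by
    simpa only [hdV, hW, of_apply] using Finset.sum_ite_pos _ hω (hNoIso v)
  have hdE_pos : ∀ e, 0 < dE e := fun e => by
    simpa only [hdE, hR, of_apply] using Finset.sum_ite_pos _ hγ (hNoEmpty e)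
  have hdV_mul_P : ∀ i j, dV i * P i j = ∑ e, W i e * (dE e)⁻¹ * R e j := fun i j => by
    rw [hP, inv_diagonal_of_ne_zero fun v => (hdV_pos v).ne',
      inv_diagonal_of_ne_zero fun e => (hdE_pos e).ne', diagonal_mul_mul_diagonal_mul_apply,
      Pi.inv_apply, mul_inv_cancel_left₀ (hdV_pos i).ne']
    rfl
  refine ⟨fun v => γ v * dV v, fun v => mul_pos (hγ v) (hdV_pos v), fun i j => ?_⟩
  rw [mul_assoc, mul_assoc, hdV_mul_P, hdV_mul_P, hW, hR]
  simpa only [of_apply] using incidence_sum_symm mem γ ω (fun e => (dE e)⁻¹) i j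

/-- With edge-INDEPENDENT vertex weights `γ(v)`, the hypergraph random
walk `P = D_V⁻¹ W D_E⁻¹ R` is reversible: it satisfies detailed balance with respect
to some positive vector. -/
theorem stmt_17 {n m : ℕ} (mem : Fin m → Fin n → Bool)
    (γ : Fin n → ℝ) (ω : Fin m → ℝ)
    (hγ : ∀ v, 0 < γ v) (hω : ∀ e, 0 < ω e)
    (hNoEmpty : ∀ e, ∃ v, mem e v) (hNoIso : ∀ v, ∃ e, mem e v)
    (hconn : ∀ u v : Fin n,
      Relation.ReflTransGen (fun a b => ∃ e, mem e a ∧ mem e b) u v)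
    (R : Matrix (Fin m) (Fin n) ℝ) (W : Matrix (Fin n) (Fin m) ℝ)
    (hR : R = Matrix.of fun e v => if mem e v then γ v else 0)
    (hW : W = Matrix.of fun v e => if mem e v then ω e else 0)
    (dV : Fin n → ℝ) (dE : Fin m → ℝ)
    (hdV : dV = fun v => ∑ e, W v e) (hdE : dE = fun e => ∑ v, R e v)
    (P : Matrix (Fin n) (Fin n) ℝ)
    (hP : P = (Matrix.diagonal dV)⁻¹ * W * (Matrix.diagonal dE)⁻¹ * R) :
    ∃ σ : Fin n → ℝ, (∀ v, 0 < σ v) ∧ ∀ i j, σ i * P i j = σ j * P j i :=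
  stmt_17_general mem γ ω hγ hω hNoEmpty hNoIso R W hR hW dV dE hdV hdE P hP
end
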